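/- Let B ∈ ℝ², let R ≥ 2h > 0 and C_W > 1, and let W : ℝ² → ℝ be a continuously differentiable radial function (i.e. W(z) = w(|z|) for some function w) with W(z) = 1 for |z| ≤ R, W(z) = 0 for |z| ≥ R + h, |∇W(z)| ≤ C_W/h for all z, and |∇W(z) − ∇W(z')| ≤ (C_W/h²)|z − z'| for all z, z'. Let ω : ℝ² → [0, ∞) be bounded, measurable, compactly supported, with ∫_{ℝ²} (y − B) ω(y) dy = 0, moment of inertia I = ∫_{ℝ²} |y − B|² ω(y) dy, and tail mass m(R) = ∫_{|y−B| > R} ω(y) dy. Then |(1/2) ∫_{ℝ²}∫_{ℝ²} [∇W(x−B) − ∇W(y−B)] · K(x−y) ω(x) ω(y) dx dy| ≤ (4 C_W/π) (1/(R³h) + 1/(R²h²)) I m(R). -/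

import Mathlib

/-!
The kernel `k(x, y) = (∇W(x - B) - ∇W(y - B)) · K(x - y)` is symmetric and vanishes unless `x` or
`y` lies in the annulus `A = {R < |· - B| < R + h}` carrying `∇W(· - B)`. Symmetrizing, half the
double integral is `∫_A ω(x) ∫ ω(y) k(x, y) c(y) dy dx` for a weight `|c| ≤ 1` equal to `1` off `A`,
so it suffices to bound the inner integral by a multiple of `I` for each `x ∈ A`; the outer integral
then costs `∫_A ω ≤ m(R)`.

Fix `x ∈ A`, `r = |x - B|`, and split the inner integral at `|y - B| = r / 2`. Far from `B`, the
Lipschitz bound gives `|k| ≤ C_W / (2π h²)`, which is paid for by `|y - B|² ≥ r² / 4`. Near `B`,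
`∇W(y - B) = 0`, and `∇W(x - B)` is parallel to `x - B` because `W` is radial, so
`k(x, y) = -∇W(x - B) · (y - B)^⊥ / (2π |x - y|²)`. Replacing `|x - y|⁻²` by `r⁻²` costs
`O(|y - B| / r³)`, and what remains is a first moment of `ω` over the near region, which equals
minus the one over the far region since `B` is the center of vorticity.
-/

open MeasureTheory Real
open scoped RealInnerProductSpace

/-- The plane `ℝ²` with the Euclidean norm. -/
abbrev E2 := EuclideanSpace ℝ (Fin 2)

open Classical in
/-- The two-dimensional Biot–Savart kernel
`K(x) = (1/(2π)) (−x₂, x₁)/|x|²`, with `K(0) = 0`. -/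
noncomputable def K (x : E2) : E2 :=
  if x = 0 then 0
  else (2 * Real.pi * ‖x‖ ^ 2)⁻¹ • (WithLp.equiv 2 (Fin 2 → ℝ)).symm ![-(x 1), x 0]

open Metric

section SymmetrizationWeight

variable {α : Type*} {A : Set α}

/-- With `φ x y = A.indicator 1 x * symmetrizationWeight A y`, `φ x y + φ y x = 1` as soon as
`x ∈ A` or `y ∈ A`. -/
noncomputable def symmetrizationWeight (A : Set α) (y : α) : ℝ :=
  1 - A.indicator (fun _ => 1 / 2) y

theorem measurable_symmetrizationWeight [MeasurableSpace α] (hA : MeasurableSet A) :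
    Measurable (symmetrizationWeight A) :=
  measurable_const.sub (measurable_const.indicator hA)

theorem abs_symmetrizationWeight_le (A : Set α) (y : α) : |symmetrizationWeight A y| ≤ 1 := by
  by_cases hy : y ∈ A <;> norm_num [symmetrizationWeight, hy]

theorem symmetrizationWeight_of_notMem {y : α} (hy : y ∉ A) : symmetrizationWeight A y = 1 := by
  simp [symmetrizationWeight, hy]

end SymmetrizationWeight

section Integration

variable {α : Type*} [MeasurableSpace α] {μ : Measure α}

theorem norm_setIntegral_le_mul_integral {E : Type*} [NormedAddCommGroup E] [NormedSpace ℝ E]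
    {f : α → E} {q : α → ℝ} {s : Set α} {a : ℝ} (hs : MeasurableSet s) (hq : Integrable q μ)
    (hq0 : ∀ y, 0 ≤ q y) (ha : 0 ≤ a) (hf : ∀ y ∈ s, ‖f y‖ ≤ a * q y) :
    ‖∫ y in s, f y ∂μ‖ ≤ a * ∫ y, q y ∂μ :=
  calc ‖∫ y in s, f y ∂μ‖ ≤ ∫ y in s, a * q y ∂μ :=
        norm_integral_le_of_norm_le (hq.const_mul a).integrableOn (ae_restrict_of_forall_mem hs hf)
    _ = a * ∫ y in s, q y ∂μ := integral_const_mul a q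
    _ ≤ a * ∫ y, q y ∂μ :=
        mul_le_mul_of_nonneg_left (setIntegral_le_integral hq (.of_forall hq0)) ha

theorem abs_setIntegral_mul_le_mul_setIntegral {ω J : α → ℝ} {A T : Set α} {κ : ℝ}
    (hA : MeasurableSet A) (hT : MeasurableSet T) (hAT : A ⊆ T) (hω : Integrable ω μ)
    (hnn : ∀ x, 0 ≤ ω x) (hκ : 0 ≤ κ) (hJ : ∀ x ∈ A, |J x| ≤ κ) :
    |∫ x in A, ω x * J x ∂μ| ≤ κ * ∫ x in T, ω x ∂μ := by
  rw [← Real.norm_eq_abs, ← integral_indicator hT]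
  refine norm_setIntegral_le_mul_integral hA (hω.indicator hT)
    (fun x => Set.indicator_nonneg (fun x _ => hnn x) x) hκ fun x hx => ?_
  rw [Set.indicator_of_mem (hAT hx), norm_mul, Real.norm_of_nonneg (hnn x), mul_comm]
  exact mul_le_mul_of_nonneg_right (hJ x hx) (hnn x)

section CompactSupport

variable [TopologicalSpace α] {E : Type*} [NormedAddCommGroup E]

theorem HasCompactSupport.integrable_of_norm_le [OpensMeasurableSpace α]
    [IsFiniteMeasureOnCompacts μ] {f : α → E} (hs : HasCompactSupport f)
    (hf : AEStronglyMeasurable f μ) {M : ℝ} (hM : ∀ y, ‖f y‖ ≤ M) : Integrable f μ :=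
  (integrableOn_iff_integrable_of_support_subset (subset_tsupport f)).1
    (Measure.integrableOn_of_bounded hs.measure_lt_top.ne hf (.of_forall hM))

theorem HasCompactSupport.integrable_smul_continuous [OpensMeasurableSpace α] [T2Space α]
    [NormedSpace ℝ E] [SecondCountableTopology E] {ω : α → ℝ} {φ : α → E} (hs : HasCompactSupport ω)
    (hω : Integrable ω μ) (hφ : Continuous φ) : Integrable (fun y => ω y • φ y) μ :=
  (integrableOn_iff_integrable_of_support_subset
    ((Function.support_smul_subset_left ω φ).trans (subset_tsupport ω))).1
    (hω.integrableOn.smul_continuousOn hφ.continuousOn hs)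

end CompactSupport

theorem integral_eq_two_mul_integral_of_swap [SFinite μ] {F φ : α × α → ℝ}
    (hF : ∀ p, F p.swap = F p) (hφ : ∀ p, F p ≠ 0 → φ p + φ p.swap = 1)
    (hφF : Integrable (fun p => φ p * F p) (μ.prod μ)) :
    ∫ p, F p ∂μ.prod μ = 2 * ∫ p, φ p * F p ∂μ.prod μ := by
  have hsplit : ∀ p, F p = φ p * F p + φ p.swap * F p.swap := fun p => by
    by_cases hp : F p = 0
    · simp [hF, hp]
    · rw [hF, ← add_mul, hφ p hp, one_mul]
  have hswap : Integrable (fun p => φ p.swap * F p.swap) (μ.prod μ) := hφF.swap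
  rw [integral_congr_ae (.of_forall hsplit), integral_add hφF hswap,
    integral_prod_swap (fun p => φ p * F p)]
  ring

theorem half_integral_integral_eq_setIntegral [SFinite μ] {ω : α → ℝ} {k : α → α → ℝ}
    {A : Set α} {G : ℝ} (hA : MeasurableSet A) (hω : Integrable ω μ)
    (hk : Measurable (Function.uncurry k)) (hkG : ∀ x y, |k x y| ≤ G)
    (hk_comm : ∀ x y, k y x = k x y) (hk_zero : ∀ x y, x ∉ A → y ∉ A → k x y = 0) :
    (1 / 2) * ∫ x, ∫ y, ω x * ω y * k x y ∂μ ∂μ =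
      ∫ x in A, ω x * ∫ y, ω y * k x y * symmetrizationWeight A y ∂μ ∂μ := by
  set φ : α × α → ℝ := fun p => A.indicator 1 p.1 * symmetrizationWeight A p.2
  have hφ_meas : Measurable φ :=
    ((measurable_one.indicator hA).comp measurable_fst).mul
      ((measurable_symmetrizationWeight hA).comp measurable_snd)
  have hφ_bd : ∀ p, ‖φ p‖ ≤ 1 := fun p => by
    by_cases h1 : p.1 ∈ A <;> by_cases h2 : p.2 ∈ A <;> norm_num [φ, symmetrizationWeight, h1, h2]
  have hF : Integrable (fun p : α × α => ω p.1 * ω p.2 * k p.1 p.2) (μ.prod μ) :=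
    (hω.mul_prod hω).mul_bdd hk.aestronglyMeasurable (.of_forall fun p => hkG p.1 p.2)
  have hφF := hF.bdd_mul hφ_meas.aestronglyMeasurable (.of_forall hφ_bd)
  have hsymm := integral_eq_two_mul_integral_of_swap (φ := φ)
    (F := fun p : α × α => ω p.1 * ω p.2 * k p.1 p.2)
    (fun p => by simp only [Prod.fst_swap, Prod.snd_swap, hk_comm]; ring)
    (fun p hp => by
      have hk0 : k p.1 p.2 ≠ 0 := right_ne_zero_of_mul hp
      by_cases h1 : p.1 ∈ A <;> by_cases h2 : p.2 ∈ A <;>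
        norm_num [φ, symmetrizationWeight, h1, h2]
      exact hk0 (hk_zero _ _ h1 h2)) hφF
  rw [integral_prod _ hF, integral_prod _ hφF] at hsymm
  rw [hsymm, ← mul_assoc, one_div_mul_cancel two_ne_zero, one_mul, ← integral_indicator hA]
  refine integral_congr_ae (.of_forall fun x => ?_)
  by_cases hx : x ∈ A
  · simp only [φ, hx, Set.indicator_of_mem, Pi.one_apply, one_mul]
    rw [← integral_const_mul]
    exact integral_congr_ae (.of_forall fun y => by ring)
  · simp [φ, hx]

end Integration

section Gradient

variable {F : Type*} [NormedAddCommGroup F] [InnerProductSpace ℝ F] [CompleteSpace F]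
  {W : F → ℝ}

/-- Reflecting in the hyperplane `v^⊥ ∋ z` leaves `W` unchanged and fixes `z` but flips `v`. -/
theorem inner_gradient_eq_zero_of_radial {w : ℝ → ℝ} (hW : ∀ z, W z = w ‖z‖)
    {z v : F} (hzv : ⟪z, v⟫ = 0) : ⟪gradient W z, v⟫ = 0 := by
  set ρ := (Submodule.reflection (ℝ ∙ v)ᗮ).toContinuousLinearEquiv
  have hρz : ρ z = z := Submodule.reflection_mem_subspace_eq_self
    (Submodule.mem_orthogonal_singleton_iff_inner_left.2 hzv)
  have hWρ : W ∘ ρ = W := funext fun u => by simp [ρ, hW]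
  have hD := ρ.comp_right_fderiv (f := W) (x := z)
  rw [hWρ, hρz] at hD
  have hv : fderiv ℝ W z v = -fderiv ℝ W z v := by
    conv_lhs => rw [hD]
    simp [ρ, Submodule.reflection_orthogonalComplement_singleton_eq_neg]
  rw [inner_gradient_left]
  linarith

theorem continuous_gradient_of_lipschitz {L : ℝ}
    (hW : ∀ z z', ‖gradient W z - gradient W z'‖ ≤ L * ‖z - z'‖) : Continuous (gradient W) :=
  (LipschitzWith.of_dist_le_mul (K := L.toNNReal) fun z z' => by
    simpa [dist_eq_norm] using (hW z z').trans (by gcongr; exact le_coe_toNNReal L)).continuous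

theorem gradient_eq_zero_of_mem_closure (hcont : Continuous (gradient W)) {s : Set F}
    (hs : IsOpen s) {c : ℝ} (hW : ∀ z ∈ s, W z = c) {z : F} (hz : z ∈ closure s) :
    gradient W z = 0 := by
  refine closure_minimal (fun u hu => ?_) (isClosed_eq hcont continuous_const) hz
  have hloc : W =ᶠ[nhds u] fun _ => c := Filter.eventually_of_mem (hs.mem_nhds hu) hW
  simp [gradient, hloc.fderiv_eq]

variable {R a : ℝ} {z : F}

theorem gradient_eq_zero_of_norm_le (hcont : Continuous (gradient W)) (hR : R ≠ 0)
    (hW : ∀ z, ‖z‖ ≤ R → W z = a) (hz : ‖z‖ ≤ R) : gradient W z = 0 := by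
  refine gradient_eq_zero_of_mem_closure hcont isOpen_ball (c := a)
    (fun u hu => hW u (mem_ball_zero_iff.1 hu).le) ?_
  rwa [closure_ball 0 hR, mem_closedBall_zero_iff]

theorem gradient_eq_zero_of_le_norm (hcont : Continuous (gradient W)) (hR : R ≠ 0)
    (hW : ∀ z, R ≤ ‖z‖ → W z = a) (hz : R ≤ ‖z‖) : gradient W z = 0 := by
  refine gradient_eq_zero_of_mem_closure hcont (isClosed_closedBall (x := 0) (ε := R)).isOpen_compl
    (c := a) (fun u hu => hW u (not_le.1 (by simpa using hu)).le) ?_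
  rwa [closure_compl, interior_closedBall 0 hR, Set.mem_compl_iff, mem_ball_zero_iff, not_lt]

theorem gradient_sub_eq_zero_of_notMem {B x : F} {h b : ℝ} (hcont : Continuous (gradient W))
    (hR : 0 < R) (hh : 0 < h) (hin : ∀ z, ‖z‖ ≤ R → W z = a) (hout : ∀ z, R + h ≤ ‖z‖ → W z = b)
    (hx : x ∉ ball B (R + h) \ closedBall B R) : gradient W (x - B) = 0 := by
  simp only [Set.mem_sdiff, mem_ball_iff_norm, mem_closedBall_iff_norm, not_and_or, not_lt,
    not_not] at hx
  rcases hx with hx | hx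
  · exact gradient_eq_zero_of_le_norm hcont (by positivity) hout hx
  · exact gradient_eq_zero_of_norm_le hcont hR.ne' hin hx

end Gradient

theorem abs_inv_norm_sub_sq_sub_inv_norm_sq_le {F : Type*} [SeminormedAddCommGroup F] {a b : F}
    (ha : 0 < ‖a‖) (hb : ‖b‖ ≤ ‖a‖ / 2) :
    |(‖a - b‖ ^ 2)⁻¹ - (‖a‖ ^ 2)⁻¹| ≤ 10 * ‖b‖ / ‖a‖ ^ 3 := by
  have hab : |‖a‖ - ‖a - b‖| ≤ ‖b‖ := by
    simpa using abs_norm_sub_norm_le a (a - b)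
  have hlow : ‖a‖ / 2 ≤ ‖a - b‖ := by linarith [(abs_le.1 hab).2]
  have hup : ‖a - b‖ ≤ 3 / 2 * ‖a‖ := by linarith [(abs_le.1 hab).1]
  have hs : 0 < ‖a - b‖ := by linarith
  rw [inv_sub_inv (by positivity) (by positivity), abs_div,
    abs_of_pos (by positivity : 0 < ‖a - b‖ ^ 2 * ‖a‖ ^ 2),
    div_le_div_iff₀ (by positivity) (by positivity), sq_sub_sq, abs_mul,
    abs_of_pos (by positivity : 0 < ‖a‖ + ‖a - b‖)]
  have : ‖a‖ ^ 2 / 4 ≤ ‖a - b‖ ^ 2 := by nlinarith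
  calc (‖a‖ + ‖a - b‖) * |‖a‖ - ‖a - b‖| * ‖a‖ ^ 3 ≤ (5 / 2 * ‖a‖) * ‖b‖ * ‖a‖ ^ 3 := by
        gcongr; linarith
    _ = 10 * ‖b‖ * (‖a‖ ^ 2 / 4 * ‖a‖ ^ 2) := by ring
    _ ≤ 10 * ‖b‖ * (‖a - b‖ ^ 2 * ‖a‖ ^ 2) := by gcongr

noncomputable def perp : E2 →ₗᵢ[ℝ] E2 :=
  LinearMap.isometryOfInner
    { toFun := fun x => (WithLp.equiv 2 (Fin 2 → ℝ)).symm ![-(x 1), x 0]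
      map_add' := fun x y => by ext i; fin_cases i <;> simp [add_comm]
      map_smul' := fun c x => by ext i; fin_cases i <;> simp }
    fun x y => by simp [PiLp.inner_apply, Fin.sum_univ_two, add_comm]

theorem inner_perp_self (x : E2) : ⟪x, perp x⟫ = 0 := by
  simp [perp, PiLp.inner_apply, Fin.sum_univ_two, mul_comm]

theorem inner_perp_right (x y : E2) : ⟪x, perp y⟫ = -⟪perp x, y⟫ := by
  simp [perp, PiLp.inner_apply, Fin.sum_univ_two]

theorem abs_inner_perp_le (v u : E2) : |⟪v, perp u⟫| ≤ ‖v‖ * ‖u‖ := by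
  simpa using abs_real_inner_le_norm v (perp u)

theorem K_eq_smul_perp (x : E2) : K x = (2 * π * ‖x‖ ^ 2)⁻¹ • perp x := by
  unfold K
  split_ifs with hx
  · simp [hx]
  · rfl

theorem K_neg (x : E2) : K (-x) = -K x := by
  simp [K_eq_smul_perp]

theorem measurable_K : Measurable K := by
  rw [funext K_eq_smul_perp]; fun_prop

theorem norm_K_le (x : E2) : ‖K x‖ ≤ (2 * π * ‖x‖)⁻¹ := by
  rcases eq_or_ne x 0 with rfl | hx
  · simp [K_eq_smul_perp]
  have := norm_pos_iff.2 hx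
  rw [K_eq_smul_perp, norm_smul, perp.norm_map, norm_inv, Real.norm_of_nonneg (by positivity)]
  exact le_of_eq (by field_simp)

theorem abs_inner_K_le {v z : E2} {L : ℝ} (hL : 0 ≤ L) (hv : ‖v‖ ≤ L * ‖z‖) :
    |⟪v, K z⟫| ≤ L / (2 * π) := by
  rcases eq_or_ne z 0 with rfl | hz
  · simpa [K_eq_smul_perp] using (by positivity : 0 ≤ L / (2 * π))
  have := norm_pos_iff.2 hz
  calc |⟪v, K z⟫| ≤ ‖v‖ * ‖K z‖ := abs_real_inner_le_norm _ _
    _ ≤ L * ‖z‖ * (2 * π * ‖z‖)⁻¹ := by gcongr; exact norm_K_le z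
    _ = L / (2 * π) := by field_simp

noncomputable def interactionKernel (W : E2 → ℝ) (B x y : E2) : ℝ :=
  ⟪gradient W (x - B) - gradient W (y - B), K (x - y)⟫

section InteractionKernel

variable {W : E2 → ℝ} {B : E2}

theorem interactionKernel_comm (x y : E2) :
    interactionKernel W B y x = interactionKernel W B x y := by
  rw [interactionKernel, interactionKernel, ← neg_sub x y, K_neg, inner_neg_right,
    ← inner_neg_left, neg_sub]

theorem abs_interactionKernel_le {L : ℝ} (hL : 0 ≤ L)
    (hlip : ∀ z z', ‖gradient W z - gradient W z'‖ ≤ L * ‖z - z'‖) (x y : E2) :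
    |interactionKernel W B x y| ≤ L / (2 * π) :=
  abs_inner_K_le hL (by simpa using hlip (x - B) (y - B))

theorem measurable_interactionKernel (hW : Continuous (gradient W)) :
    Measurable (Function.uncurry (interactionKernel W B)) := by
  unfold interactionKernel
  have := measurable_K
  fun_prop

theorem interactionKernel_eq_of_gradient_eq_zero {w : ℝ → ℝ} (hrad : ∀ z, W z = w ‖z‖)
    {x y : E2} (hy : gradient W (y - B) = 0) :
    interactionKernel W B x y =
      -((2 * π * ‖x - y‖ ^ 2)⁻¹ * ⟪gradient W (x - B), perp (y - B)⟫) := by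
  have hperp : perp (x - y) = perp (x - B) - perp (y - B) := by
    rw [← map_sub, sub_sub_sub_cancel_right]
  rw [interactionKernel, hy, sub_zero, K_eq_smul_perp, real_inner_smul_right, hperp,
    inner_sub_right, inner_gradient_eq_zero_of_radial hrad (inner_perp_self _)]
  ring

variable {ω c : E2 → ℝ} {x : E2}

theorem abs_setIntegral_far_le {L ρ : ℝ} (hL : 0 ≤ L) (hρ : 0 < ρ)
    (hlip : ∀ z z', ‖gradient W z - gradient W z'‖ ≤ L * ‖z - z'‖) (hnn : ∀ y, 0 ≤ ω y)
    (hq : Integrable fun y => ‖y - B‖ ^ 2 * ω y) (hc : ∀ y, |c y| ≤ 1) :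
    |∫ y in {y | ρ < ‖y - B‖}, ω y * interactionKernel W B x y * c y| ≤
      L / (2 * π * ρ ^ 2) * ∫ y, ‖y - B‖ ^ 2 * ω y := by
  have hS : MeasurableSet {y : E2 | ρ < ‖y - B‖} := measurableSet_lt (by fun_prop) (by fun_prop)
  rw [← Real.norm_eq_abs]
  refine norm_setIntegral_le_mul_integral hS hq (fun y => by have := hnn y; positivity)
    (by positivity) fun y (hy : ρ < ‖y - B‖) => ?_
  have := hnn y
  calc ‖ω y * interactionKernel W B x y * c y‖
      = ω y * (|interactionKernel W B x y| * |c y|) := by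
        rw [Real.norm_eq_abs, abs_mul, abs_mul, abs_of_nonneg this, mul_assoc]
    _ ≤ ω y * (L / (2 * π) * 1) := by
        gcongr
        exacts [abs_interactionKernel_le hL hlip x y, hc y]
    _ = L / (2 * π * ρ ^ 2) * (ρ ^ 2 * ω y) := by field_simp
    _ ≤ L / (2 * π * ρ ^ 2) * (‖y - B‖ ^ 2 * ω y) := by gcongr

theorem abs_setIntegral_inner_perp_le {ρ : ℝ} (hρ : 0 < ρ) (hnn : ∀ y, 0 ≤ ω y)
    (hω : Integrable ω) (hsupp : HasCompactSupport ω)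
    (hq : Integrable fun y => ‖y - B‖ ^ 2 * ω y) (hcen : ∫ y, ω y • (y - B) = 0) (v : E2) :
    |∫ y in {y | ‖y - B‖ ≤ ρ}, ω y * ⟪v, perp (y - B)⟫| ≤
      ‖v‖ / ρ * ∫ y, ‖y - B‖ ^ 2 * ω y := by
  have hS : MeasurableSet {y : E2 | ‖y - B‖ ≤ ρ} := measurableSet_le (by fun_prop) (by fun_prop)
  have hmoment : Integrable fun y => ω y • (y - B) :=
    hsupp.integrable_smul_continuous hω (by fun_prop)
  have hℓ : Integrable fun y => ω y * ⟪v, perp (y - B)⟫ :=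
    hsupp.integrable_smul_continuous hω (by fun_prop)
  have hzero : ∫ y, ω y * ⟪v, perp (y - B)⟫ = 0 := by
    simp_rw [inner_perp_right, mul_neg, ← real_inner_smul_right]
    rw [integral_neg, integral_inner hmoment, hcen, inner_zero_right, neg_zero]
  have hsplit := integral_add_compl hS hℓ
  rw [hzero, add_eq_zero_iff_eq_neg] at hsplit
  rw [hsplit, abs_neg, ← Real.norm_eq_abs]
  refine norm_setIntegral_le_mul_integral hS.compl hq (fun y => by have := hnn y; positivity)
    (by positivity) fun y hy => ?_
  have hy : ρ < ‖y - B‖ := not_le.1 hy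
  have := hnn y
  calc ‖ω y * ⟪v, perp (y - B)⟫‖ ≤ ω y * (‖v‖ * ‖y - B‖) := by
        rw [Real.norm_eq_abs, abs_mul, abs_of_nonneg this]
        exact mul_le_mul_of_nonneg_left (abs_inner_perp_le v (y - B)) this
    _ = ‖v‖ / ρ * (ρ * ‖y - B‖ * ω y) := by field_simp
    _ ≤ ‖v‖ / ρ * (‖y - B‖ ^ 2 * ω y) := by rw [sq]; gcongr

theorem abs_inner_perp_mul_inv_sq_sub_le (v : E2) {x y : E2} (hx : 0 < ‖x - B‖)
    (hy : ‖y - B‖ ≤ ‖x - B‖ / 2) :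
    |⟪v, perp (y - B)⟫ * ((‖x - y‖ ^ 2)⁻¹ - (‖x - B‖ ^ 2)⁻¹)| ≤
      10 * ‖v‖ / ‖x - B‖ ^ 3 * ‖y - B‖ ^ 2 := by
  have hd := abs_inv_norm_sub_sq_sub_inv_norm_sq_le hx hy
  rw [sub_sub_sub_cancel_right] at hd
  have hinner := abs_inner_perp_le v (y - B)
  rw [abs_mul]
  calc |⟪v, perp (y - B)⟫| * |(‖x - y‖ ^ 2)⁻¹ - (‖x - B‖ ^ 2)⁻¹|
      ≤ ‖v‖ * ‖y - B‖ * (10 * ‖y - B‖ / ‖x - B‖ ^ 3) := by gcongr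
    _ = 10 * ‖v‖ / ‖x - B‖ ^ 3 * ‖y - B‖ ^ 2 := by ring

theorem abs_setIntegral_near_le {w : ℝ → ℝ} {R : ℝ} (hrad : ∀ z, W z = w ‖z‖)
    (hzero : ∀ z, ‖z‖ ≤ R → gradient W z = 0) (hnn : ∀ y, 0 ≤ ω y) (hω : Integrable ω)
    (hsupp : HasCompactSupport ω) (hq : Integrable fun y => ‖y - B‖ ^ 2 * ω y)
    (hcen : ∫ y, ω y • (y - B) = 0) (hc : ∀ y, ‖y - B‖ ≤ R → c y = 1) (hx : 0 < ‖x - B‖)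
    (hxR : ‖x - B‖ ≤ 2 * R) :
    |∫ y in {y | ‖y - B‖ ≤ ‖x - B‖ / 2}, ω y * interactionKernel W B x y * c y| ≤
      6 * ‖gradient W (x - B)‖ / (π * ‖x - B‖ ^ 3) * ∫ y, ‖y - B‖ ^ 2 * ω y := by
  set r := ‖x - B‖
  set g := gradient W (x - B)
  set S := {y : E2 | ‖y - B‖ ≤ r / 2}
  set I := ∫ y, ‖y - B‖ ^ 2 * ω y
  set ℓ : E2 → ℝ := fun y => ω y * ⟪g, perp (y - B)⟫
  set d : E2 → ℝ := fun y => (‖x - y‖ ^ 2)⁻¹ - (r ^ 2)⁻¹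
  have hS : MeasurableSet S := measurableSet_le (by fun_prop) (by fun_prop)
  have hI : 0 ≤ I := integral_nonneg fun y => by have := hnn y; positivity
  have hℓ : Integrable ℓ := hsupp.integrable_smul_continuous hω (by fun_prop)
  have hℓd_bd : ∀ y ∈ S, ‖ℓ y * d y‖ ≤ 10 * ‖g‖ / r ^ 3 * (‖y - B‖ ^ 2 * ω y) := fun y hy => by
    have := hnn y
    rw [Real.norm_eq_abs, mul_assoc, abs_mul, abs_of_nonneg this, mul_comm, ← mul_assoc]
    exact mul_le_mul_of_nonneg_right (abs_inner_perp_mul_inv_sq_sub_le g hx hy) this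
  have hℓd : IntegrableOn (fun y => ℓ y * d y) S :=
    Integrable.mono' (hq.const_mul _).integrableOn
      (hℓ.aestronglyMeasurable.mul (by fun_prop)).restrict (ae_restrict_of_forall_mem hS hℓd_bd)
  have hpt : ∀ y ∈ S, ω y * interactionKernel W B x y * c y =
      -(2 * π)⁻¹ * (ℓ y * d y + (r ^ 2)⁻¹ * ℓ y) := by
    intro y (hy : ‖y - B‖ ≤ r / 2)
    have hyR : ‖y - B‖ ≤ R := by linarith
    rw [interactionKernel_eq_of_gradient_eq_zero hrad (hzero _ hyR), hc y hyR, mul_inv]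
    ring
  rw [setIntegral_congr_fun hS hpt, integral_const_mul,
    integral_add hℓd (hℓ.integrableOn.const_mul _), integral_const_mul, abs_mul, abs_neg,
    abs_inv, abs_of_pos (by positivity : 0 < 2 * π)]
  calc (2 * π)⁻¹ * |(∫ y in S, ℓ y * d y) + (r ^ 2)⁻¹ * ∫ y in S, ℓ y|
      ≤ (2 * π)⁻¹ * (10 * ‖g‖ / r ^ 3 * I + (r ^ 2)⁻¹ * (‖g‖ / (r / 2) * I)) := by
        gcongr
        refine (abs_add_le _ _).trans (add_le_add ?_ ?_)
        · exact norm_setIntegral_le_mul_integral hS hq (fun y => by have := hnn y; positivity)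
            (by positivity) hℓd_bd
        · rw [abs_mul, abs_of_pos (by positivity)]
          gcongr
          exact abs_setIntegral_inner_perp_le (half_pos hx) hnn hω hsupp hq hcen g
    _ = 6 * ‖g‖ / (π * r ^ 3) * I := by field_simp; ring

theorem abs_integral_interactionKernel_le {w : ℝ → ℝ} {L M R : ℝ} (hrad : ∀ z, W z = w ‖z‖)
    (hL : 0 ≤ L) (hlip : ∀ z z', ‖gradient W z - gradient W z'‖ ≤ L * ‖z - z'‖)
    (hM : ‖gradient W (x - B)‖ ≤ M) (hzero : ∀ z, ‖z‖ ≤ R → gradient W z = 0)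
    (hnn : ∀ y, 0 ≤ ω y) (hω : Integrable ω) (hsupp : HasCompactSupport ω)
    (hcen : ∫ y, ω y • (y - B) = 0) (hc_meas : Measurable c) (hc_bd : ∀ y, |c y| ≤ 1)
    (hc_one : ∀ y, ‖y - B‖ ≤ R → c y = 1) (hR : 0 < R) (hRx : R ≤ ‖x - B‖)
    (hxR : ‖x - B‖ ≤ 2 * R) :
    |∫ y, ω y * interactionKernel W B x y * c y| ≤
      (2 * L / (π * R ^ 2) + 6 * M / (π * R ^ 3)) * ∫ y, ‖y - B‖ ^ 2 * ω y := by
  set r := ‖x - B‖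
  have hx : 0 < r := hR.trans_le hRx
  set S := {y : E2 | ‖y - B‖ ≤ r / 2}
  have hS : MeasurableSet S := measurableSet_le (by fun_prop) (by fun_prop)
  have hSc : Sᶜ = {y | r / 2 < ‖y - B‖} := by ext; simp [S]
  have hq : Integrable fun y => ‖y - B‖ ^ 2 * ω y := by
    simpa only [smul_eq_mul, mul_comm] using
      hsupp.integrable_smul_continuous hω (φ := fun y => ‖y - B‖ ^ 2) (by fun_prop)
  have hk : Measurable (interactionKernel W B x) :=
    (measurable_interactionKernel (continuous_gradient_of_lipschitz hlip)).of_uncurry_left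
  have hint : Integrable fun y => ω y * interactionKernel W B x y * c y :=
    (hω.mul_bdd hk.aestronglyMeasurable
      (.of_forall fun y => abs_interactionKernel_le hL hlip x y)).mul_bdd
      hc_meas.aestronglyMeasurable (.of_forall hc_bd)
  have hI : 0 ≤ ∫ y, ‖y - B‖ ^ 2 * ω y := integral_nonneg fun y => by have := hnn y; positivity
  have hfar := abs_setIntegral_far_le (x := x) hL (half_pos hx) hlip hnn hq hc_bd
  rw [← hSc] at hfar
  have hM0 : 0 ≤ M := (norm_nonneg _).trans hM
  calc |∫ y, ω y * interactionKernel W B x y * c y|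
      ≤ (6 * M / (π * r ^ 3) + 2 * L / (π * r ^ 2)) * ∫ y, ‖y - B‖ ^ 2 * ω y := by
        rw [← integral_add_compl hS hint, add_mul]
        refine (abs_add_le _ _).trans (add_le_add
          ((abs_setIntegral_near_le hrad hzero hnn hω hsupp hq hcen hc_one hx hxR).trans
            (mul_le_mul_of_nonneg_right (by gcongr) hI))
          (hfar.trans_eq ?_))
        field_simp
    _ ≤ (2 * L / (π * R ^ 2) + 6 * M / (π * R ^ 3)) * ∫ y, ‖y - B‖ ^ 2 * ω y := by
        rw [add_comm (6 * M / (π * r ^ 3))]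
        exact mul_le_mul_of_nonneg_right (add_le_add (by gcongr) (by gcongr)) hI

theorem abs_half_integral_interactionKernel_le {w : ℝ → ℝ} {R h L M a b : ℝ}
    (hrad : ∀ z, W z = w ‖z‖) (hh : 0 < h) (hhR : h ≤ R) (hWin : ∀ z, ‖z‖ ≤ R → W z = a)
    (hWout : ∀ z, R + h ≤ ‖z‖ → W z = b) (hL : 0 ≤ L)
    (hlip : ∀ z z', ‖gradient W z - gradient W z'‖ ≤ L * ‖z - z'‖) (hM : ∀ z, ‖gradient W z‖ ≤ M)
    (hnn : ∀ y, 0 ≤ ω y) (hω : Integrable ω) (hsupp : HasCompactSupport ω)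
    (hcen : ∫ y, ω y • (y - B) = 0) :
    |(1 / 2) * ∫ x, ∫ y, ω x * ω y * interactionKernel W B x y| ≤
      (2 * L / (π * R ^ 2) + 6 * M / (π * R ^ 3)) * (∫ y, ‖y - B‖ ^ 2 * ω y) *
        ∫ y in {y : E2 | R < ‖y - B‖}, ω y := by
  have hR : 0 < R := hh.trans_le hhR
  have hM0 : 0 ≤ M := (norm_nonneg _).trans (hM 0)
  have hI : 0 ≤ ∫ y, ‖y - B‖ ^ 2 * ω y := integral_nonneg fun y => by have := hnn y; positivity
  have hcont := continuous_gradient_of_lipschitz hlip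
  set A := ball B (R + h) \ closedBall B R
  have hA : MeasurableSet A := measurableSet_ball.diff measurableSet_closedBall
  have hzero (x) (hx : x ∉ A) := gradient_sub_eq_zero_of_notMem hcont hR hh hWin hWout hx
  have hAT : A ⊆ {y | R < ‖y - B‖} := fun x hx => show R < ‖x - B‖ by
    simpa [A, dist_eq_norm] using hx.2
  rw [half_integral_integral_eq_setIntegral hA hω (measurable_interactionKernel hcont)
    (abs_interactionKernel_le hL hlip) interactionKernel_comm
    (fun x y hx hy => by simp [interactionKernel, hzero x hx, hzero y hy])]
  refine abs_setIntegral_mul_le_mul_setIntegral hA (measurableSet_lt (by fun_prop) (by fun_prop))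
    hAT hω hnn (by positivity) fun x hx => ?_
  have hRx : R < ‖x - B‖ := hAT hx
  have hxR : ‖x - B‖ < R + h := by simpa [A, dist_eq_norm] using hx.1
  exact abs_integral_interactionKernel_le hrad hL hlip (hM _)
    (fun z hz => gradient_eq_zero_of_norm_le hcont hR.ne' hWin hz) hnn hω hsupp hcen
    (measurable_symmetrizationWeight hA) (abs_symmetrizationWeight_le A)
    (fun y hy => symmetrizationWeight_of_notMem fun hyA => hyA.2 (mem_closedBall_iff_norm.2 hy))
    hR hRx.le (by linarith)

end InteractionKernel

theorem self_interaction_coefficient_le {R h C : ℝ} (hh : 0 < h) (hhR : h ≤ R) (hC : 0 ≤ C) :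
    2 * (C / h ^ 2) / (π * R ^ 2) + 6 * (C / h) / (π * R ^ 3) ≤
      4 * C / π * (1 / (R ^ 3 * h) + 1 / (R ^ 2 * h ^ 2)) := by
  have hR : 0 < R := hh.trans_le hhR
  have hdiff : 4 * C / π * (1 / (R ^ 3 * h) + 1 / (R ^ 2 * h ^ 2)) -
      (2 * (C / h ^ 2) / (π * R ^ 2) + 6 * (C / h) / (π * R ^ 3)) =
      2 * C * (R - h) / (π * h ^ 2 * R ^ 3) := by
    field_simp
    ring
  have : 0 ≤ R - h := by linarith
  rw [← sub_nonneg, hdiff]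
  positivity

theorem stmt11_general (B : E2) (R h C_W : ℝ) (hh : 0 < h) (hRh : 2 * h ≤ R)
    (W : E2 → ℝ) (hrad : ∃ w : ℝ → ℝ, ∀ z : E2, W z = w ‖z‖)
    (hWin : ∀ z : E2, ‖z‖ ≤ R → W z = 1) (hWout : ∀ z : E2, R + h ≤ ‖z‖ → W z = 0)
    (hgrad_bd : ∀ z : E2, ‖gradient W z‖ ≤ C_W / h)
    (hgrad_lip : ∀ z z' : E2, ‖gradient W z - gradient W z'‖ ≤ C_W / h ^ 2 * ‖z - z'‖)
    (ω : E2 → ℝ) (hnn : ∀ y, 0 ≤ ω y) (hmeas : Measurable ω)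
    (hbdd : ∃ M, ∀ y, ω y ≤ M) (hsupp : HasCompactSupport ω)
    (hcen : (∫ y, ω y • (y - B)) = (0 : E2)) :
    |(1/2) * ∫ x, ∫ y, ω x * ω y *
        ⟪gradient W (x - B) - gradient W (y - B), K (x - y)⟫| ≤
      4 * C_W / Real.pi * (1 / (R ^ 3 * h) + 1 / (R ^ 2 * h ^ 2)) *
        (∫ y, ‖y - B‖ ^ 2 * ω y) * (∫ y in {y : E2 | R < ‖y - B‖}, ω y) := by
  obtain ⟨w, hw⟩ := hrad
  obtain ⟨M, hM⟩ := hbdd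
  have hC : 0 ≤ C_W := by simpa [le_div_iff₀ hh] using (norm_nonneg _).trans (hgrad_bd 0)
  have hω : Integrable ω := hsupp.integrable_of_norm_le hmeas.aestronglyMeasurable
    (M := M) fun y => by rw [Real.norm_of_nonneg (hnn y)]; exact hM y
  have hI : 0 ≤ ∫ y, ‖y - B‖ ^ 2 * ω y := integral_nonneg fun y => by have := hnn y; positivity
  have hm : 0 ≤ ∫ y in {y : E2 | R < ‖y - B‖}, ω y :=
    setIntegral_nonneg (measurableSet_lt (by fun_prop) (by fun_prop)) fun y _ => hnn y
  calc _ ≤ (2 * (C_W / h ^ 2) / (π * R ^ 2) + 6 * (C_W / h) / (π * R ^ 3)) *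
        (∫ y, ‖y - B‖ ^ 2 * ω y) * ∫ y in {y : E2 | R < ‖y - B‖}, ω y :=
      abs_half_integral_interactionKernel_le hw hh (by linarith) hWin hWout (by positivity)
        hgrad_lip hgrad_bd hnn hω hsupp hcen
    _ ≤ _ := mul_le_mul_of_nonneg_right (mul_le_mul_of_nonneg_right
        (self_interaction_coefficient_le hh (by linarith) hC) hI) hm

/-- Estimate on the self-interaction term `H₃` in the evolution of the mollified
tail mass of the vorticity. -/
theorem stmt11 (B : E2) (R h C_W : ℝ) (hh : 0 < h) (hRh : 2 * h ≤ R) (hCW : 1 < C_W)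
    (W : E2 → ℝ) (hW1 : ContDiff ℝ 1 W) (hrad : ∃ w : ℝ → ℝ, ∀ z : E2, W z = w ‖z‖)
    (hWin : ∀ z : E2, ‖z‖ ≤ R → W z = 1) (hWout : ∀ z : E2, R + h ≤ ‖z‖ → W z = 0)
    (hgrad_bd : ∀ z : E2, ‖gradient W z‖ ≤ C_W / h)
    (hgrad_lip : ∀ z z' : E2, ‖gradient W z - gradient W z'‖ ≤ C_W / h ^ 2 * ‖z - z'‖)
    (ω : E2 → ℝ) (hnn : ∀ y, 0 ≤ ω y) (hmeas : Measurable ω)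
    (hbdd : ∃ M, ∀ y, ω y ≤ M) (hsupp : HasCompactSupport ω)
    (hcen : (∫ y, ω y • (y - B)) = (0 : E2)) :
    |(1/2) * ∫ x, ∫ y, ω x * ω y *
        ⟪gradient W (x - B) - gradient W (y - B), K (x - y)⟫| ≤
      4 * C_W / Real.pi * (1 / (R ^ 3 * h) + 1 / (R ^ 2 * h ^ 2)) *
        (∫ y, ‖y - B‖ ^ 2 * ω y) * (∫ y in {y : E2 | R < ‖y - B‖}, ω y) :=
  stmt11_general B R h C_W hh hRh W hrad hWin hWout hgrad_bd hgrad_lip ω hnn hmeas hbdd hsupp hcen
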